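/- arXiv:0808.1525 — 6 statements merged into one kernel-verified Lean document; each statement's English description precedes it below -/
import Mathlib

section
/- Let c, s, r₁, r₂, ℓ₁, ℓ₂ be positive integers with s·c = r₁·r₂ + ℓ₁·ℓ₂. Suppose that for every prime p, v_p(c) ≤ (v_p(ℓ₁) + v_p(ℓ₂))/2, and that gcd(ℓ₁, c) divides r₁ and gcd(ℓ₂, c) divides r₂. Then gcd(c, ℓ₁, ℓ₂) divides gcd(c, s, r₁, r₂), and in particular gcd(c, ℓ₁, ℓ₂) ≤ gcd(c, s, r₁, r₂). -/
theorem gcd_estimate (c s r₁ r₂ ℓ₁ ℓ₂ : ℕ)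
    (hc : 0 < c) (hs : 0 < s) (hr₁ : 0 < r₁) (hr₂ : 0 < r₂)
    (hℓ₁ : 0 < ℓ₁) (hℓ₂ : 0 < ℓ₂)
    (heq : s * c = r₁ * r₂ + ℓ₁ * ℓ₂)
    (hval : ∀ p : ℕ, p.Prime →
      2 * padicValNat p c ≤ padicValNat p ℓ₁ + padicValNat p ℓ₂)
    (hd₁ : Nat.gcd ℓ₁ c ∣ r₁) (hd₂ : Nat.gcd ℓ₂ c ∣ r₂) :
    Nat.gcd c (Nat.gcd ℓ₁ ℓ₂) ∣ Nat.gcd c (Nat.gcd s (Nat.gcd r₁ r₂)) ∧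
      Nat.gcd c (Nat.gcd ℓ₁ ℓ₂) ≤ Nat.gcd c (Nat.gcd s (Nat.gcd r₁ r₂)) := by
  set g := Nat.gcd c (Nat.gcd ℓ₁ ℓ₂) with hg
  have hgc : g ∣ c := Nat.gcd_dvd_left _ _
  have hgl₁ : g ∣ ℓ₁ := (Nat.gcd_dvd_right _ _).trans (Nat.gcd_dvd_left _ _)
  have hgl₂ : g ∣ ℓ₂ := (Nat.gcd_dvd_right _ _).trans (Nat.gcd_dvd_right _ _)
  have hgr₁ : g ∣ r₁ := (Nat.dvd_gcd hgl₁ hgc).trans hd₁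
  have hgr₂ : g ∣ r₂ := (Nat.dvd_gcd hgl₂ hgc).trans hd₂
  have hg0 : 0 < g := Nat.pos_of_dvd_of_pos hgc hc
  -- key: g ∣ s
  have hgs : g ∣ s := by
    rw [← Nat.factorization_le_iff_dvd hg0.ne' hs.ne']
    intro p
    by_cases hp : p.Prime
    · haveI : Fact p.Prime := ⟨hp⟩
      rw [Nat.factorization_def _ hp, Nat.factorization_def _ hp]
      set a := padicValNat p ℓ₁
      set b := padicValNat p ℓ₂
      set cv := padicValNat p c
      set k := padicValNat p g
      have hka : k ≤ a := by
        rw [← padicValNat_dvd_iff_le hℓ₁.ne']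
        exact dvd_trans pow_padicValNat_dvd hgl₁
      have hkb : k ≤ b := by
        rw [← padicValNat_dvd_iff_le hℓ₂.ne']
        exact dvd_trans pow_padicValNat_dvd hgl₂
      have hkc : k ≤ cv := by
        rw [← padicValNat_dvd_iff_le hc.ne']
        exact dvd_trans pow_padicValNat_dvd hgc
      have hr₁v : min a cv ≤ padicValNat p r₁ := by
        rw [← padicValNat_dvd_iff_le hr₁.ne']
        refine dvd_trans (Nat.dvd_gcd ?_ ?_) hd₁ <;>
          rw [padicValNat_dvd_iff_le (by omega)] <;> omega
      have hr₂v : min b cv ≤ padicValNat p r₂ := by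
        rw [← padicValNat_dvd_iff_le hr₂.ne']
        refine dvd_trans (Nat.dvd_gcd ?_ ?_) hd₂ <;>
          rw [padicValNat_dvd_iff_le (by omega)] <;> omega
      have h2c : 2 * cv ≤ a + b := hval p hp
      -- p^(cv+k) divides both products
      have hdl : p ^ (cv + k) ∣ ℓ₁ * ℓ₂ := by
        rw [padicValNat_dvd_iff_le (by positivity),
          padicValNat.mul hℓ₁.ne' hℓ₂.ne']
        omega
      have hdr : p ^ (cv + k) ∣ r₁ * r₂ := by
        rw [padicValNat_dvd_iff_le (by positivity),
          padicValNat.mul hr₁.ne' hr₂.ne']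
        omega
      have hdsc : p ^ (cv + k) ∣ s * c := heq ▸ dvd_add hdr hdl
      rw [padicValNat_dvd_iff_le (by positivity),
        padicValNat.mul hs.ne' hc.ne'] at hdsc
      omega
    · simp [Nat.factorization_eq_zero_of_not_prime _ hp]
  have hdvd : g ∣ Nat.gcd c (Nat.gcd s (Nat.gcd r₁ r₂)) :=
    Nat.dvd_gcd hgc (Nat.dvd_gcd hgs (Nat.dvd_gcd hgr₁ hgr₂))
  exact ⟨hdvd, Nat.le_of_dvd (Nat.gcd_pos_of_pos_left _ hc) hdvd⟩
end

section
/- Let C, S, R₁, R₂ ≥ 1 be real numbers, and let u, N, d₁, d₂ be positive integers. Suppose |u/N − a/q| ≤ 1/(qH) for some integers a, q with gcd(a,q) = 1, 1 ≤ q ≤ H ≤ N. Then the number of quadruples of integers (c, s, r₁, r₂) with C ≤ c < 2C, |s| ≤ S, |r₁| ≤ R₁, |r₂| ≤ R₂ and N dividing u²d₁d₂c + u(d₁r₂ + d₂r₁) + s is at most a constant times C·min(R₁,R₂)·( S(d₁R₂+d₂R₁)/N + Sq/N + (d₁R₂+d₂R₁)²/(qH) + (d₁R₂+d₂R₁)/q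 + 1 ). -/
/-!
Fix `c` and whichever of `r₁`, `r₂` has the smaller range: the other one is then determined by
`m = d₁ r₂ + d₂ r₁`, and `|m| ≤ D := d₁ R₂ + d₂ R₁`. So it suffices to bound, uniformly in `t`, the
number of pairs `(m, s)` with `|m| ≤ D`, `|s| ≤ S` and `N ∣ t + u m + s`; for each `m` there are at
most `2S/N + 1` values of `s`. If `S ≥ N` the trivial count of `m` suffices. Otherwise write
`u q = a N + e` with `|e| ≤ N / H`: the integer `w = (q t + e m + q s) / N` lies in an interval of
length `2D/H + 2qS/N` and satisfies `a m + w ≡ 0 [ZMOD q]`, so it fixes `m` modulo `q`, which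
leaves at most `2D/q + 1` values of `m`, and `s` has at most `3` values.
-/

open Finset

theorem Finset.card_le_card_image_mul {ι M R : Type*} [DecidableEq M] [CommSemiring R]
    [PartialOrder R] [IsOrderedRing R] (f : ι → M) (s : Finset ι) {B : R}
    (h : ∀ b ∈ s.image f, (#{a ∈ s | f a = b} : R) ≤ B) :
    (#s : R) ≤ #(s.image f) * B := by
  rw [card_eq_sum_card_image f s, Nat.cast_sum, ← nsmul_eq_mul]
  exact sum_le_card_nsmul _ _ _ h

noncomputable def intIcc (x y : ℝ) : Finset ℤ := Icc ⌈x⌉ ⌊y⌋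

theorem mem_intIcc {x y : ℝ} {n : ℤ} : n ∈ intIcc x y ↔ x ≤ n ∧ (n : ℝ) ≤ y := by
  simp [intIcc, Int.ceil_le, Int.le_floor]

theorem card_intIcc_le {x y : ℝ} (h : x ≤ y + 1) : (#(intIcc x y) : ℝ) ≤ y - x + 1 := by
  have : (((⌊y⌋ + 1 - ⌈x⌉).toNat : ℤ) : ℝ) ≤ y - x + 1 := by
    rw [Int.toNat_eq_max]
    push_cast
    exact max_le (by linarith [Int.le_ceil x, Int.floor_le y]) (by linarith)
  rw [intIcc, Int.card_Icc]
  exact_mod_cast this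

theorem card_le_of_forall_modEq {ι : Type*} {s : Finset ι} {f : ι → ℤ} {r : ℤ} {x y : ℝ}
    (hf : Set.InjOn f s) (hr : 0 < r) (hxy : x ≤ y) (hmem : ∀ i ∈ s, x ≤ f i ∧ (f i : ℝ) ≤ y)
    (hmod : ∀ i ∈ s, ∀ j ∈ s, f i ≡ f j [ZMOD r]) :
    (#s : ℝ) ≤ (y - x) / r + 1 := by
  have hr' : (0 : ℝ) < r := by exact_mod_cast hr
  obtain rfl | ⟨i₀, hi₀⟩ := s.eq_empty_or_nonempty
  · simp only [card_empty, Nat.cast_zero]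
    have : 0 ≤ (y - x) / r := div_nonneg (by linarith) hr'.le
    linarith
  have hdiv (i) (hi : i ∈ s) : r * ((f i - f i₀) / r) = f i - f i₀ :=
    Int.mul_ediv_cancel' (hmod i₀ hi₀ i hi).dvd
  have hcast (i) (hi : i ∈ s) : (((f i - f i₀) / r : ℤ) : ℝ) = (f i - f i₀) / r := by
    rw [eq_div_iff hr'.ne', mul_comm]
    exact_mod_cast hdiv i hi
  have hinj : Set.InjOn (fun i => (f i - f i₀) / r) s := fun i hi j hj hij =>
    hf hi hj (by linarith [hdiv i hi, hdiv j hj, congrArg (r * ·) hij])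
  have hsub : s.image (fun i => (f i - f i₀) / r) ⊆ intIcc ((x - f i₀) / r) ((y - f i₀) / r) := by
    simp only [subset_iff, mem_image, mem_intIcc, forall_exists_index, and_imp]
    rintro _ i hi rfl
    rw [hcast i hi]
    exact ⟨by gcongr; exact (hmem i hi).1, by gcongr; exact (hmem i hi).2⟩
  calc (#s : ℝ) = #(s.image fun i => (f i - f i₀) / r) := by rw [card_image_of_injOn hinj]
    _ ≤ #(intIcc ((x - f i₀) / r) ((y - f i₀) / r)) := by exact_mod_cast card_le_card hsub
    _ ≤ (y - f i₀) / r - (x - f i₀) / r + 1 := by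
        apply card_intIcc_le
        have : (x - f i₀) / r ≤ (y - f i₀) / r := by gcongr
        linarith
    _ = (y - x) / r + 1 := by ring

theorem abs_mul_sub_mul_le_div {u N a q H : ℝ} (hN : 0 < N) (hq : 0 < q)
    (happ : |u / N - a / q| ≤ 1 / (q * H)) : |u * q - a * N| ≤ N / H := by
  have : u * q - a * N = N * q * (u / N - a / q) := by field_simp
  rw [this, abs_mul, abs_of_pos (by positivity)]
  calc N * q * |u / N - a / q| ≤ N * q * (1 / (q * H)) := by gcongr
    _ = N / H := by field_simp

noncomputable def congrPairs (N u t : ℤ) (D S : ℝ) : Finset (ℤ × ℤ) :=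
  {p ∈ intIcc (-D) D ×ˢ intIcc (-S) S | N ∣ t + u * p.1 + p.2}

/-- For `(m, s) ∈ congrPairs N u t D S` this is the integer `(q t + (u q - a N) m + q s) / N`. It
determines `m` modulo `q`, and it ranges over a short interval when `u / N` is close to `a / q`. -/
def congrLabel (N u t a q : ℤ) (p : ℤ × ℤ) : ℤ := q * ((t + u * p.1 + p.2) / N) - a * p.1

section congrPairs

variable {N u t a q : ℤ} {D S H : ℝ}

theorem mem_congrPairs {p : ℤ × ℤ} :
    p ∈ congrPairs N u t D S ↔
      (|(p.1 : ℝ)| ≤ D ∧ |(p.2 : ℝ)| ≤ S) ∧ N ∣ t + u * p.1 + p.2 := by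
  simp [congrPairs, mem_intIcc, abs_le]

theorem card_filter_fst_eq_le {P : Finset (ℤ × ℤ)} (hP : P ⊆ congrPairs N u t D S) (hN : 0 < N)
    (hS : 0 ≤ S) (m : ℤ) : (#{p ∈ P | p.1 = m} : ℝ) ≤ 2 * S / N + 1 := by
  have hmem (p) (hp : p ∈ {p ∈ P | p.1 = m}) := mem_filter.1 hp
  refine (card_le_of_forall_modEq (f := Prod.snd) (x := -S) (y := S) ?_ hN (by linarith) ?_
    ?_).trans (le_of_eq (by ring))
  · intro p hp p' hp' h
    exact Prod.ext ((hmem p hp).2.trans (hmem p' hp').2.symm) h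
  · intro p hp
    exact abs_le.1 (mem_congrPairs.1 (hP (hmem p hp).1)).1.2
  · have hdvd (p) (hp : p ∈ {p ∈ P | p.1 = m}) : N ∣ t + u * m + p.2 :=
      (hmem p hp).2 ▸ (mem_congrPairs.1 (hP (hmem p hp).1)).2
    intro p hp p' hp'
    exact Int.modEq_iff_dvd.2 (by simpa using dvd_sub (hdvd p' hp') (hdvd p hp))

theorem card_image_fst_filter_congrLabel_eq_le (hco : IsCoprime a q) (hq : 0 < q) (hD : 0 ≤ D)
    (w : ℤ) :
    (#({p ∈ congrPairs N u t D S | congrLabel N u t a q p = w}.image Prod.fst) : ℝ) ≤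
      2 * D / q + 1 := by
  refine (card_le_of_forall_modEq (f := id) (x := -D) (y := D) (Set.injOn_id _) hq (by linarith) ?_
    ?_).trans (le_of_eq (by ring))
  · simp only [mem_image, mem_filter]
    rintro _ ⟨p, ⟨hp, -⟩, rfl⟩
    exact abs_le.1 (mem_congrPairs.1 hp).1.1
  · simp only [mem_image, mem_filter]
    rintro _ ⟨p, ⟨-, hp⟩, rfl⟩ _ ⟨p', ⟨-, hp'⟩, rfl⟩
    have hdvd : q ∣ a * (p'.1 - p.1) :=
      ⟨(t + u * p'.1 + p'.2) / N - (t + u * p.1 + p.2) / N, by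
        simp only [congrLabel] at hp hp'
        linear_combination hp - hp'⟩
    exact Int.modEq_iff_dvd.2 (hco.symm.dvd_of_dvd_mul_left hdvd)

theorem abs_congrLabel_sub_le {p : ℤ × ℤ} (hp : p ∈ congrPairs N u t D S) (hN : 0 < N)
    (hq : 0 < q) (happ : |(u : ℝ) / N - a / q| ≤ 1 / (q * H)) :
    |(congrLabel N u t a q p : ℝ) - q * t / N| ≤ D / H + q * S / N := by
  have hN' : (0 : ℝ) < N := by exact_mod_cast hN
  have hq' : (0 : ℝ) < q := by exact_mod_cast hq
  obtain ⟨⟨hm, hs⟩, hdvd⟩ := mem_congrPairs.1 hp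
  have hk : (((t + u * p.1 + p.2) / N : ℤ) : ℝ) * N = t + u * p.1 + p.2 := by
    exact_mod_cast Int.ediv_mul_cancel hdvd
  have hlabel : (congrLabel N u t a q p : ℝ) - q * t / N =
      ((u * q - a * N) * p.1 + q * p.2) / N := by
    simp only [congrLabel]
    push_cast
    field_simp
    linear_combination q * hk
  rw [hlabel, abs_div, abs_of_pos hN', div_le_iff₀ hN']
  calc |(u * q - a * N : ℝ) * p.1 + q * p.2|
        ≤ |(u * q - a * N : ℝ)| * |(p.1 : ℝ)| + q * |(p.2 : ℝ)| :=
        (abs_add_le _ _).trans_eq (by rw [abs_mul, abs_mul, abs_of_pos hq'])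
    _ ≤ N / H * D + q * S := by
        have he := abs_mul_sub_mul_le_div hN' hq' happ
        have := (abs_nonneg _).trans he
        gcongr
    _ = (D / H + q * S / N) * N := by field_simp

theorem card_image_congrLabel_le (hN : 0 < N) (hq : 0 < q) (hH : 0 < H) (hD : 0 ≤ D) (hS : 0 ≤ S)
    (happ : |(u : ℝ) / N - a / q| ≤ 1 / (q * H)) :
    (#((congrPairs N u t D S).image (congrLabel N u t a q)) : ℝ) ≤
      2 * D / H + 2 * q * S / N + 1 := by
  set δ := D / H + q * S / N
  have hsub : (congrPairs N u t D S).image (congrLabel N u t a q) ⊆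
      intIcc (q * t / N - δ) (q * t / N + δ) := by
    simp only [subset_iff, mem_image, mem_intIcc, forall_exists_index, and_imp]
    rintro _ p hp rfl
    have := abs_le.1 (abs_congrLabel_sub_le hp hN hq happ)
    constructor <;> linarith [this.1, this.2]
  have hδ : 0 ≤ δ := by
    have : (0 : ℝ) < N := by exact_mod_cast hN
    have : (0 : ℝ) < q := by exact_mod_cast hq
    positivity
  calc (#((congrPairs N u t D S).image (congrLabel N u t a q)) : ℝ)
      ≤ #(intIcc (q * t / N - δ) (q * t / N + δ)) := by exact_mod_cast card_le_card hsub
    _ ≤ q * t / N + δ - (q * t / N - δ) + 1 := card_intIcc_le (by linarith)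
    _ = 2 * D / H + 2 * q * S / N + 1 := by ring

theorem card_congrPairs_le_mul_of_approx (hN : 0 < N) (hco : IsCoprime a q) (hq : 0 < q)
    (hH : 0 < H) (hD : 0 ≤ D) (hS : 0 ≤ S) (happ : |(u : ℝ) / N - a / q| ≤ 1 / (q * H)) :
    (#(congrPairs N u t D S) : ℝ) ≤
      (2 * D / H + 2 * q * S / N + 1) * ((2 * D / q + 1) * (2 * S / N + 1)) := by
  calc (#(congrPairs N u t D S) : ℝ)
      ≤ #((congrPairs N u t D S).image (congrLabel N u t a q)) *
          ((2 * D / q + 1) * (2 * S / N + 1)) := by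
        refine card_le_card_image_mul _ _ fun w _ => ?_
        refine (card_le_card_image_mul Prod.fst _ fun m _ =>
          card_filter_fst_eq_le (filter_subset _ _) hN hS m).trans ?_
        gcongr
        exact card_image_fst_filter_congrLabel_eq_le hco hq hD w
    _ ≤ _ := by
        gcongr
        exact card_image_congrLabel_le hN hq hH hD hS happ

theorem card_congrPairs_le_mul (hN : 0 < N) (hD : 0 ≤ D) (hS : 0 ≤ S) :
    (#(congrPairs N u t D S) : ℝ) ≤ (2 * D + 1) * (2 * S / N + 1) := by
  have hsub : (congrPairs N u t D S).image Prod.fst ⊆ intIcc (-D) D := by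
    simp only [subset_iff, mem_image, mem_intIcc, forall_exists_index, and_imp]
    rintro _ p hp rfl
    exact abs_le.1 (mem_congrPairs.1 hp).1.1
  calc (#(congrPairs N u t D S) : ℝ)
      ≤ #((congrPairs N u t D S).image Prod.fst) * (2 * S / N + 1) :=
        card_le_card_image_mul _ _ fun m _ => card_filter_fst_eq_le subset_rfl hN hS m
    _ ≤ #(intIcc (-D) D) * (2 * S / N + 1) := by gcongr
    _ ≤ (D - -D + 1) * (2 * S / N + 1) := by gcongr; exact card_intIcc_le (by linarith)
    _ = (2 * D + 1) * (2 * S / N + 1) := by ring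

theorem card_congrPairs_le (hN : 0 < N) (hco : IsCoprime a q)
    (hq : 1 ≤ q) (hqH : (q : ℝ) ≤ H) (hD : 1 ≤ D) (hS : 0 ≤ S)
    (happ : |(u : ℝ) / N - a / q| ≤ 1 / (q * H)) :
    (#(congrPairs N u t D S) : ℝ) ≤
      12 * (S * D / N + S * q / N + D ^ 2 / (q * H) + D / q + 1) := by
  have hN' : (0 : ℝ) < N := by exact_mod_cast hN
  have hq' : (1 : ℝ) ≤ q := by exact_mod_cast hq
  have hH : 0 < H := by linarith
  rcases lt_or_ge S N with hSN | hNS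
  · have hS3 : 2 * S / N + 1 ≤ 3 := by
      have : S / N < 1 := (div_lt_one hN').2 hSN
      linarith [mul_div_assoc 2 S (N : ℝ)]
    have hDH : D / H ≤ D / q := by gcongr
    calc (#(congrPairs N u t D S) : ℝ)
        ≤ (2 * D / H + 2 * q * S / N + 1) * ((2 * D / q + 1) * (2 * S / N + 1)) :=
          card_congrPairs_le_mul_of_approx hN hco (by omega) hH (by linarith) hS happ
      _ ≤ (2 * D / H + 2 * q * S / N + 1) * ((2 * D / q + 1) * 3) := by gcongr
      _ = 3 * (4 * (D ^ 2 / (q * H)) + 2 * (D / H) + 4 * (S * D / N) + 2 * (S * q / N) +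
            2 * (D / q) + 1) := by field_simp; ring
      _ ≤ 12 * (S * D / N + S * q / N + D ^ 2 / (q * H) + D / q + 1) := by
          have : 0 ≤ S * q / N := by positivity
          linarith
  · have hSN : 2 * S / N + 1 ≤ 3 * (S / N) := by
      have : 1 ≤ S / N := (one_le_div hN').2 hNS
      linarith [mul_div_assoc 2 S (N : ℝ)]
    calc (#(congrPairs N u t D S) : ℝ) ≤ (2 * D + 1) * (2 * S / N + 1) :=
          card_congrPairs_le_mul hN (by linarith) hS
      _ ≤ (3 * D) * (3 * (S / N)) := by gcongr; linarith
      _ ≤ 12 * (S * D / N + S * q / N + D ^ 2 / (q * H) + D / q + 1) := by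
          have : 0 ≤ S * q / N + D ^ 2 / (q * H) + D / q + 1 := by positivity
          have : S * D / N = D * (S / N) := by ring
          nlinarith [div_nonneg hS hN'.le]

end congrPairs

def quadruples (C S R₁ R₂ : ℝ) (u N d₁ d₂ : ℕ) : Set (ℤ × ℤ × ℤ × ℤ) :=
  {x | C ≤ x.1 ∧ (x.1 : ℝ) < 2 * C ∧
    |(x.2.1 : ℝ)| ≤ S ∧ |(x.2.2.1 : ℝ)| ≤ R₁ ∧ |(x.2.2.2 : ℝ)| ≤ R₂ ∧
    (N : ℤ) ∣ (u : ℤ) ^ 2 * d₁ * d₂ * x.1 + (u : ℤ) * (d₁ * x.2.2.2 + d₂ * x.2.2.1) + x.2.1}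

section quadruples

variable {C S R₁ R₂ : ℝ} {u N d₁ d₂ : ℕ}

theorem ncard_quadruples_comm :
    (quadruples C S R₂ R₁ u N d₂ d₁).ncard = (quadruples C S R₁ R₂ u N d₁ d₂).ncard := by
  let swap : ℤ × ℤ × ℤ × ℤ → ℤ × ℤ × ℤ × ℤ := fun x => (x.1, x.2.1, x.2.2.2, x.2.2.1)
  have hswap : Function.Involutive swap := fun _ => rfl
  have hpre : quadruples C S R₂ R₁ u N d₂ d₁ = swap ⁻¹' quadruples C S R₁ R₂ u N d₁ d₂ := by
    ext x
    simp only [quadruples, Set.mem_ofPred_eq, Set.mem_preimage, swap]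
    have : (u : ℤ) ^ 2 * d₂ * d₁ * x.1 + u * (d₂ * x.2.2.2 + d₁ * x.2.2.1) =
        (u : ℤ) ^ 2 * d₁ * d₂ * x.1 + u * (d₁ * x.2.2.1 + d₂ * x.2.2.2) := by ring
    rw [this]
    tauto
  rw [hpre, Set.ncard_preimage_of_injective_subset_range hswap.injective
    (hswap.surjective.range_eq ▸ Set.subset_univ _)]

theorem ncard_quadruples_le (hC : 1 ≤ C) (hR₁ : 1 ≤ R₁) (hd₁ : 0 < d₁) {B : ℝ}
    (hB : ∀ t : ℤ, (#(congrPairs N u t (d₁ * R₂ + d₂ * R₁) S) : ℝ) ≤ B) :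
    ((quadruples C S R₁ R₂ u N d₁ d₂).ncard : ℝ) ≤ 2 * C * (3 * R₁) * B := by
  set A := intIcc C (2 * C) ×ˢ intIcc (-R₁) R₁
  set Y := A.sigma fun p => congrPairs N u ((u : ℤ) ^ 2 * d₁ * d₂ * p.1) (d₁ * R₂ + d₂ * R₁) S
  have hY : (quadruples C S R₁ R₂ u N d₁ d₂).ncard ≤ #Y := by
    rw [← Set.ncard_coe_finset]
    refine Set.ncard_le_ncard_of_injOn
      (fun x => ⟨(x.1, x.2.2.1), ((d₁ : ℤ) * x.2.2.2 + d₂ * x.2.2.1, x.2.1)⟩) ?_ ?_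
    · rintro ⟨c, s, r₁, r₂⟩ ⟨hc₁, hc₂, hs, hr₁, hr₂, hdvd⟩
      simp only [Y, A, mem_coe, mem_sigma, mem_product, mem_intIcc, mem_congrPairs]
      refine ⟨⟨⟨hc₁, hc₂.le⟩, abs_le.1 hr₁⟩, ⟨?_, hs⟩, hdvd⟩
      push_cast
      refine (abs_add_le _ _).trans ?_
      rw [abs_mul, abs_mul, Nat.abs_cast, Nat.abs_cast]
      gcongr
    · rintro ⟨c, s, r₁, r₂⟩ - ⟨c', s', r₁', r₂'⟩ - h
      simp only [Sigma.mk.injEq, Prod.mk.injEq, heq_eq_eq] at h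
      obtain ⟨⟨rfl, rfl⟩, hm, rfl⟩ := h
      have : (d₁ : ℤ) * r₂ = d₁ * r₂' := by linarith
      rw [mul_right_injective₀ (by exact_mod_cast hd₁.ne') this]
  have hA : (#A : ℝ) ≤ 2 * C * (3 * R₁) := by
    rw [card_product, Nat.cast_mul]
    gcongr
    · exact (card_intIcc_le (by linarith)).trans (by linarith)
    · exact (card_intIcc_le (by linarith)).trans (by linarith)
  have hB0 : 0 ≤ B := (Nat.cast_nonneg _).trans (hB 0)
  calc ((quadruples C S R₁ R₂ u N d₁ d₂).ncard : ℝ) ≤ #Y := by exact_mod_cast hY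
    _ = ∑ p ∈ A, (#(congrPairs N u ((u : ℤ) ^ 2 * d₁ * d₂ * p.1) (d₁ * R₂ + d₂ * R₁) S) : ℝ) := by
        rw [card_sigma, Nat.cast_sum]
    _ ≤ ∑ _p ∈ A, B := sum_le_sum fun p _ => hB _
    _ = #A * B := by rw [sum_const, nsmul_eq_mul]
    _ ≤ 2 * C * (3 * R₁) * B := mul_le_mul_of_nonneg_right hA hB0

end quadruples

open Set

theorem congruence_count :
    ∃ K : ℝ, 0 < K ∧
      ∀ (C S R₁ R₂ : ℝ), 1 ≤ C → 1 ≤ S → 1 ≤ R₁ → 1 ≤ R₂ →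
      ∀ (u N d₁ d₂ : ℕ), 0 < u → 0 < N → 0 < d₁ → 0 < d₂ →
      ∀ (a q : ℤ) (H : ℝ), IsCoprime a q → 1 ≤ q → (q : ℝ) ≤ H → H ≤ N →
      |(u : ℝ) / N - (a : ℝ) / q| ≤ 1 / (q * H) →
      (Set.ncard {x : ℤ × ℤ × ℤ × ℤ |
          C ≤ x.1 ∧ (x.1 : ℝ) < 2 * C ∧
          |(x.2.1 : ℝ)| ≤ S ∧ |(x.2.2.1 : ℝ)| ≤ R₁ ∧ |(x.2.2.2 : ℝ)| ≤ R₂ ∧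
          (N : ℤ) ∣ (u : ℤ) ^ 2 * d₁ * d₂ * x.1 +
            (u : ℤ) * (d₁ * x.2.2.2 + d₂ * x.2.2.1) + x.2.1} : ℝ)
        ≤ K * C * min R₁ R₂ *
          (S * (d₁ * R₂ + d₂ * R₁) / N + S * q / N +
            (d₁ * R₂ + d₂ * R₁) ^ 2 / (q * H) + (d₁ * R₂ + d₂ * R₁) / q + 1) := by
  refine ⟨72, by norm_num, ?_⟩
  intro C S R₁ R₂ hC hS hR₁ hR₂ u N d₁ d₂ _ hN hd₁ hd₂ a q H hco hq hqH _ happ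
  change ((quadruples C S R₁ R₂ u N d₁ d₂).ncard : ℝ) ≤ _
  set Z := S * (d₁ * R₂ + d₂ * R₁) / N + S * q / N +
    (d₁ * R₂ + d₂ * R₁) ^ 2 / (q * H) + (d₁ * R₂ + d₂ * R₁) / q + 1
  have hD : (1 : ℝ) ≤ d₁ * R₂ + d₂ * R₁ := by
    have : (1 : ℝ) ≤ d₁ := by exact_mod_cast hd₁
    have : (1 : ℝ) ≤ d₂ := by exact_mod_cast hd₂
    nlinarith
  have hpairs (t : ℤ) : (#(congrPairs N u t (d₁ * R₂ + d₂ * R₁) S) : ℝ) ≤ 12 * Z :=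
    card_congrPairs_le (by exact_mod_cast hN) hco hq hqH hD (by linarith)
      (by simpa only [Int.cast_natCast] using happ)
  have h₁ := ncard_quadruples_le hC hR₁ hd₁ hpairs
  have h₂ := ncard_quadruples_comm ▸ ncard_quadruples_le hC hR₂ hd₂ (B := 12 * Z)
    (by rwa [add_comm (d₂ * R₁ : ℝ)])
  rcases le_total R₁ R₂ with h | h
  · rw [min_eq_left h]; linarith
  · rw [min_eq_right h]; linarith
end

section
/- Let N be a square-free positive integer and let c, s be positive integers with 4sc a perfect square, say c = m·c₂² and s = m·s₂² with m = gcd(c,s) and r = ±2m·c₂·s₂. If N divides u²c + ur + s for some integer u, then N divides gcd(N,m)·(u·c₂ ± s₂). -/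
/-- Since `n ∣ n * k ^ 2` too, `n` divides `gcd n m * k ^ 2`, hence the square `(gcd n m * k) ^ 2`,
and square-freeness removes the square. -/
theorem Squarefree.dvd_gcd_mul_of_dvd_mul_sq {α : Type*} [CommMonoidWithZero α] [GCDMonoid α]
    {n m k : α} (hn : Squarefree n) (h : n ∣ m * k ^ 2) :
    n ∣ gcd n m * k := by
  have hgcd : n ∣ gcd n m * k ^ 2 :=
    (dvd_gcd (dvd_mul_right n _) h).trans (gcd_mul_right' (k ^ 2) n m).dvd
  have hsq : n ∣ (gcd n m * k) ^ 2 := by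
    rw [mul_pow, sq (gcd n m), mul_assoc]
    exact dvd_mul_of_dvd_right hgcd _
  exact (hn.dvd_pow_iff_dvd two_ne_zero).mp hsq

theorem Int.dvd_gcd_mul_of_squarefree_of_dvd_mul_sq {n m k : ℤ} (hn : Squarefree n)
    (h : n ∣ m * k ^ 2) : n ∣ (Int.gcd n m : ℤ) * k := by
  rw [Int.coe_gcd]
  exact hn.dvd_gcd_mul_of_dvd_mul_sq h

theorem squarefree_divisibility_general (N : ℕ) (hsqf : Squarefree N)
    (c s m c₂ s₂ r u : ℤ)
    (hcm : c = m * c₂ ^ 2) (hsm : s = m * s₂ ^ 2)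
    (hdvd : (N : ℤ) ∣ u ^ 2 * c + u * r + s) :
    (r = 2 * m * c₂ * s₂ → (N : ℤ) ∣ (Int.gcd (N : ℤ) m : ℤ) * (u * c₂ + s₂)) ∧
    (r = -(2 * m * c₂ * s₂) → (N : ℤ) ∣ (Int.gcd (N : ℤ) m : ℤ) * (u * c₂ - s₂)) := by
  have hsqZ : Squarefree (N : ℤ) := Int.squarefree_natCast.mpr hsqf
  refine ⟨fun hr => ?_, fun hr => ?_⟩ <;>
  · apply Int.dvd_gcd_mul_of_squarefree_of_dvd_mul_sq hsqZ
    -- the quadratic is `m * (u * c₂ ± s₂) ^ 2`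
    convert hdvd using 1
    rw [hcm, hsm, hr]
    ring

theorem squarefree_divisibility (N : ℕ) (hN : 0 < N) (hsqf : Squarefree N)
    (c s m c₂ s₂ r u : ℤ) (hc : 0 < c) (hs : 0 < s)
    (hm : m = Int.gcd c s) (hcm : c = m * c₂ ^ 2) (hsm : s = m * s₂ ^ 2)
    (hr : r = 2 * m * c₂ * s₂ ∨ r = -(2 * m * c₂ * s₂))
    (hdvd : (N : ℤ) ∣ u ^ 2 * c + u * r + s) :
    (r = 2 * m * c₂ * s₂ → (N : ℤ) ∣ (Int.gcd (N : ℤ) m : ℤ) * (u * c₂ + s₂)) ∧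
    (r = -(2 * m * c₂ * s₂) → (N : ℤ) ∣ (Int.gcd (N : ℤ) m : ℤ) * (u * c₂ - s₂)) :=
  squarefree_divisibility_general N hsqf c s m c₂ s₂ r u hcm hsm hdvd
end

section
/- Let a, b, c, d be integers with ad − bc = n > 0, c > 0, and let z = x + iy ∈ ℍ with y > 0. Set u = |gz − z|²/(4·Im(gz)·Im(z)) where gz = (az+b)/(cz+d). If u < δ, then |2cx + d − a| ≤ 2√(δn) and ||cz+d| − √n| ≤ 4√(δn). -/
/-!
With `w = cz + d` and `Q = cz² + (d - a)z - b` (whose zeros are the fixed points of `g`), one has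
`gz - z = -Q / w` and `Im (gz) = n · Im z / |w|²`, so `u(z, gz) = |Q|² / (4n y²)` and `u < δ`
gives `|Q| ≤ 2√(δn) · y`. The first bound is `Im Q = y (2cx + d - a)`. For the second,
`|w|² - n = (2cx + d - a) Re w - c Re Q`, whose two terms are each at most `2√(δn) |w|`; dividing
`||w|² - n|` by `|w| + √n` gives the bound on `||w| - √n|`.
-/

open Complex

theorem abs_sub_le_of_abs_sq_sub_sq_le {s r k : ℝ} (hs : 0 < s) (hr : 0 ≤ r)
    (h : |s ^ 2 - r ^ 2| ≤ k * s) : |s - r| ≤ k := by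
  have hk : 0 ≤ k := nonneg_of_mul_nonneg_left ((abs_nonneg _).trans h) hs
  have hsr : 0 < s + r := by positivity
  refine le_of_mul_le_mul_right ?_ hsr
  calc |s - r| * (s + r) = |s ^ 2 - r ^ 2| := by
        rw [← abs_of_pos hsr, ← abs_mul]; ring_nf
    _ ≤ k * s := h
    _ ≤ k * (s + r) := by nlinarith

section Mobius

variable (a b c d : ℝ) (z : ℂ)

noncomputable def fixedPointQuadratic : ℂ := c * z ^ 2 + (d - a) * z - b

noncomputable def pointPairInvariant (z w : ℂ) : ℝ := ‖w - z‖ ^ 2 / (4 * w.im * z.im)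

theorem mobius_denom_ne_zero (hdet : a * d - b * c ≠ 0) (hz : z.im ≠ 0) :
    (c : ℂ) * z + d ≠ 0 := by
  intro h
  have him : c * z.im = 0 := by simpa using congrArg Complex.im h
  have hc : c = 0 := (mul_eq_zero.mp him).resolve_right hz
  have hd : d = 0 := by simpa [hc] using h
  exact hdet (by simp [hc, hd])

theorem mobius_sub_self (hw : (c : ℂ) * z + d ≠ 0) :
    (a * z + b) / (c * z + d) - z = -fixedPointQuadratic a b c d z / (c * z + d) := by
  rw [eq_div_iff hw, sub_mul, div_mul_cancel₀ _ hw, fixedPointQuadratic]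
  ring

theorem im_mobius :
    ((a * z + b) / (c * z + d)).im = (a * d - b * c) * z.im / normSq (c * z + d) := by
  simp only [div_im, add_re, add_im, mul_re, mul_im, ofReal_re, ofReal_im]
  ring

theorem fixedPointQuadratic_im :
    (fixedPointQuadratic a b c d z).im = z.im * (2 * c * z.re + d - a) := by
  simp only [fixedPointQuadratic, sq, sub_im, add_im, mul_im, mul_re, ofReal_re, ofReal_im,
    sub_re, sub_self, sub_zero, zero_mul, add_zero]
  ring

theorem normSq_mobius_denom_sub_det :
    normSq (c * z + d) - (a * d - b * c) =
      (2 * c * z.re + d - a) * (c * z + d).re - c * (fixedPointQuadratic a b c d z).re := by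
  simp only [fixedPointQuadratic, normSq_apply, sq, add_re, add_im, sub_re, sub_im, mul_re,
    mul_im, ofReal_re, ofReal_im, sub_self, sub_zero, zero_mul, add_zero]
  ring

theorem pointPairInvariant_mobius (hw : (c : ℂ) * z + d ≠ 0) :
    pointPairInvariant z ((a * z + b) / (c * z + d)) =
      ‖fixedPointQuadratic a b c d z‖ ^ 2 / (4 * (a * d - b * c) * z.im ^ 2) := by
  have hN : normSq ((c : ℂ) * z + d) ≠ 0 := normSq_eq_zero.not.mpr hw
  rw [pointPairInvariant, mobius_sub_self a b c d z hw, im_mobius, norm_div, norm_neg, div_pow,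
    Complex.sq_norm ((c : ℂ) * z + d)]
  field_simp

end Mobius

section Bounds

variable {a b c d n δ : ℝ} {z : ℂ}

theorem norm_fixedPointQuadratic_le (hdet : a * d - b * c = n) (hn : 0 < n) (hz : 0 < z.im)
    (hu : pointPairInvariant z ((a * z + b) / (c * z + d)) < δ) :
    ‖fixedPointQuadratic a b c d z‖ ≤ 2 * √(δ * n) * z.im := by
  have hw := mobius_denom_ne_zero a b c d z (hdet ▸ hn.ne') hz.ne'
  rw [pointPairInvariant_mobius a b c d z hw, hdet, div_lt_iff₀ (by positivity)] at hu
  calc ‖fixedPointQuadratic a b c d z‖ ≤ √(δ * n * (2 * z.im) ^ 2) :=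
        Real.le_sqrt_of_sq_le (by linarith)
    _ = 2 * √(δ * n) * z.im := by
        rw [Real.sqrt_mul' _ (by positivity), Real.sqrt_sq (by positivity)]; ring

theorem abs_two_mul_re_add_sub_le (hdet : a * d - b * c = n) (hn : 0 < n) (hz : 0 < z.im)
    (hu : pointPairInvariant z ((a * z + b) / (c * z + d)) < δ) :
    |2 * c * z.re + d - a| ≤ 2 * √(δ * n) := by
  have hQ := (abs_im_le_norm _).trans (norm_fixedPointQuadratic_le hdet hn hz hu)
  rw [fixedPointQuadratic_im, abs_mul, abs_of_pos hz, mul_comm] at hQ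
  exact le_of_mul_le_mul_right hQ hz

theorem abs_norm_mobius_denom_sub_sqrt_le (hdet : a * d - b * c = n) (hn : 0 < n)
    (hz : 0 < z.im) (hu : pointPairInvariant z ((a * z + b) / (c * z + d)) < δ) :
    |‖(c : ℂ) * z + d‖ - √n| ≤ 4 * √(δ * n) := by
  set w : ℂ := c * z + d
  set Q := fixedPointQuadratic a b c d z
  set q := √(δ * n)
  have hw : w ≠ 0 := mobius_denom_ne_zero a b c d z (hdet ▸ hn.ne') hz.ne'
  have hQ : |Q.re| ≤ 2 * q * z.im :=
    (abs_re_le_norm Q).trans (norm_fixedPointQuadratic_le hdet hn hz hu)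
  have htrace := abs_two_mul_re_add_sub_le hdet hn hz hu
  refine abs_sub_le_of_abs_sq_sub_sq_le (norm_pos_iff.mpr hw) (Real.sqrt_nonneg _) ?_
  calc |‖w‖ ^ 2 - √n ^ 2|
      = |(2 * c * z.re + d - a) * w.re - c * Q.re| := by
        rw [Real.sq_sqrt hn.le, Complex.sq_norm, ← hdet, normSq_mobius_denom_sub_det]
    _ ≤ |2 * c * z.re + d - a| * |w.re| + |c| * |Q.re| := by
        rw [← abs_mul, ← abs_mul]; exact abs_sub _ _
    _ ≤ 2 * q * ‖w‖ + |c| * (2 * q * z.im) := by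
        gcongr
        exact abs_re_le_norm w
    _ = 2 * q * ‖w‖ + 2 * q * |w.im| := by
        rw [show w.im = c * z.im by simp [w], abs_mul, abs_of_pos hz]; ring
    _ ≤ 2 * q * ‖w‖ + 2 * q * ‖w‖ := by gcongr; exact abs_im_le_norm w
    _ = 4 * q * ‖w‖ := by ring

end Bounds

theorem point_pair_invariant_bounds_general (a b c d n : ℤ) (x y δ : ℝ)
    (hdet : a * d - b * c = n) (hn : 0 < n) (hy : 0 < y) :
    let z : ℂ := (x : ℂ) + (y : ℂ) * Complex.I
    let gz : ℂ := ((a : ℂ) * z + (b : ℂ)) / ((c : ℂ) * z + (d : ℂ))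
    let u : ℝ := ‖gz - z‖ ^ 2 / (4 * gz.im * z.im)
    u < δ →
      |2 * (c : ℝ) * x + (d : ℝ) - (a : ℝ)| ≤ 2 * Real.sqrt (δ * n) ∧
      |‖(c : ℂ) * z + (d : ℂ)‖ - Real.sqrt n| ≤ 4 * Real.sqrt (δ * n) := by
  intro z gz u hu
  have hdetR : (a : ℝ) * d - b * c = n := by exact_mod_cast hdet
  have hnR : (0 : ℝ) < n := by exact_mod_cast hn
  have hz : z.re = x ∧ z.im = y := by simp [z]
  have hu' : pointPairInvariant z ((a * z + b) / (c * z + d)) < δ := by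
    simpa [pointPairInvariant] using hu
  constructor
  · simpa [hz.1] using abs_two_mul_re_add_sub_le hdetR hnR (hz.2 ▸ hy) hu'
  · simpa using abs_norm_mobius_denom_sub_sqrt_le hdetR hnR (hz.2 ▸ hy) hu'

theorem point_pair_invariant_bounds (a b c d n : ℤ) (x y δ : ℝ)
    (hdet : a * d - b * c = n) (hn : 0 < n) (hc : 0 < c) (hy : 0 < y) (hδ : 0 ≤ δ) :
    let z : ℂ := (x : ℂ) + (y : ℂ) * Complex.I
    let gz : ℂ := ((a : ℂ) * z + (b : ℂ)) / ((c : ℂ) * z + (d : ℂ))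
    let u : ℝ := ‖gz - z‖ ^ 2 / (4 * gz.im * z.im)
    u < δ →
      |2 * (c : ℝ) * x + (d : ℝ) - (a : ℝ)| ≤ 2 * Real.sqrt (δ * n) ∧
      |‖(c : ℂ) * z + (d : ℂ)‖ - Real.sqrt n| ≤ 4 * Real.sqrt (δ * n) :=
  point_pair_invariant_bounds_general a b c d n x y δ hdet hn hy
end

section
/- Let k ≥ 2, and define W(y) = Γ(k)^(-1/2) (4πy)^(k/2) e^(-2πy) for y > 0. Then W attains its maximum at y₀ = k/(4π), and there exist absolute constants c₁, c₂ > 0 such that c₁ k^(1/4) ≤ W(y₀) ≤ c₂ k^(1/4). Moreover, for y > 10k one has W(y) ≤ C k^(1/4) e^(-πy) for an absolute constant C. -/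
/-!
Write `W y = Γ(k)^(-1/2) φ(4πy)` with `φ x = x^(k/2) e^(-x/2)`. Comparing logarithms,
`log (x/k) ≤ x/k - 1` shows that `φ` peaks at `x = k`, and `log u ≤ u/2 - 1` for `u ≥ 16`
gives the extra decay `e^(-x/4)` beyond `x = 16k`. At the peak,
`W(y₀)² = k^k e^(-k) / Γ(k) = √k / (√2 sₖ)` with `sₖ = k! / (√(2k) (k/e)^k)` the Stirling sequence,
which decreases from `s₁ = e/√2` to `√π`; hence `W(y₀) ≍ k^(1/4)`.
-/

open Real

namespace Stirling

theorem pow_mul_exp_neg_div_Gamma {n : ℕ} (hn : n ≠ 0) :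
    (n : ℝ) ^ n * exp (-n) / Gamma n = √n / (√2 * stirlingSeq n) := by
  obtain ⟨m, rfl⟩ : ∃ m, n = m + 1 := ⟨n - 1, by omega⟩
  have hG : Gamma (m + 1 : ℕ) = m.factorial := by
    rw [Nat.cast_succ, Gamma_nat_eq_factorial]
  have hexp : exp (-(m + 1 : ℕ)) = (exp 1 ^ (m + 1))⁻¹ := by
    rw [← exp_nat_mul, mul_one, exp_neg]
  rw [hG, hexp, stirlingSeq, sqrt_mul zero_le_two, Nat.factorial_succ, div_pow]
  field_simp
  rw [sq_sqrt (Nat.cast_nonneg _)]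
  push_cast
  ring

theorem sqrt_two_mul_stirlingSeq_le_exp_one {n : ℕ} (hn : n ≠ 0) : √2 * stirlingSeq n ≤ exp 1 := by
  obtain ⟨m, rfl⟩ : ∃ m, n = m + 1 := ⟨n - 1, by omega⟩
  have h := stirlingSeq'_antitone (Nat.zero_le m)
  simp only [Function.comp_apply, stirlingSeq_one] at h
  rw [le_div_iff₀' (by positivity)] at h
  exact h

end Stirling

section RpowMulExp

variable {a b x : ℝ}

theorem rpow_mul_exp_neg_mul_le_of_log_le (ha : 0 < a) (hb : 0 < b) (hx : 0 < x) {t : ℝ}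
    (h : a * log (b * x / a) ≤ b * x - a - t) :
    x ^ a * exp (-(b * x)) ≤ (a / b) ^ a * exp (-a) * exp (-t) := by
  have hab : 0 < a / b := div_pos ha hb
  rw [← log_le_log_iff (by positivity) (by positivity), log_mul (by positivity) (by positivity),
    log_mul (by positivity) (by positivity), log_mul (by positivity) (by positivity),
    log_rpow hx, log_rpow hab, log_exp, log_exp, log_exp]
  have hlog : log (b * x / a) = log x - log (a / b) := by
    rw [← log_div hx.ne' hab.ne', div_div_eq_mul_div, mul_comm x b]
  rw [hlog] at h
  linarith

theorem rpow_mul_exp_neg_mul_le (ha : 0 < a) (hb : 0 < b) (hx : 0 < x) :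
    x ^ a * exp (-(b * x)) ≤ (a / b) ^ a * exp (-a) := by
  have h : a * log (b * x / a) ≤ b * x - a - 0 := by
    have hu := log_le_sub_one_of_pos (show 0 < b * x / a by positivity)
    calc a * log (b * x / a) ≤ a * (b * x / a - 1) := by gcongr
      _ = b * x - a - 0 := by field_simp; ring
  simpa using rpow_mul_exp_neg_mul_le_of_log_le ha hb hx h

theorem log_le_div_two_sub_one {u : ℝ} (hu : 16 ≤ u) : log u ≤ u / 2 - 1 := by
  have hsqrt : 4 ≤ √u := by
    rw [show (4 : ℝ) = √16 by rw [show (16 : ℝ) = 4 ^ 2 by norm_num, sqrt_sq zero_le_four]]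
    exact sqrt_le_sqrt hu
  have hlog := log_le_sub_one_of_pos (show 0 < √u by positivity)
  rw [log_sqrt (by positivity)] at hlog
  nlinarith [sq_sqrt (show 0 ≤ u by positivity)]

theorem rpow_mul_exp_neg_mul_le_of_le (ha : 0 < a) (hb : 0 < b) (hx : 16 * (a / b) ≤ x) :
    x ^ a * exp (-(b * x)) ≤ (a / b) ^ a * exp (-a) * exp (-(b * x / 2)) := by
  have hu : 16 ≤ b * x / a := by
    rw [le_div_iff₀ ha]
    calc 16 * a = b * (16 * (a / b)) := by field_simp
      _ ≤ b * x := by gcongr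
  refine rpow_mul_exp_neg_mul_le_of_log_le ha hb (lt_of_lt_of_le (by positivity) hx) ?_
  calc a * log (b * x / a) ≤ a * (b * x / a / 2 - 1) := by gcongr; exact log_le_div_two_sub_one hu
    _ = b * x - a - b * x / 2 := by field_simp; ring

end RpowMulExp

noncomputable def whittakerProfile (k y : ℝ) : ℝ := (4 * π * y) ^ (k / 2) * exp (-2 * π * y)

theorem whittakerProfile_eq (k y : ℝ) :
    whittakerProfile k y = (4 * π * y) ^ (k / 2) * exp (-(1 / 2 * (4 * π * y))) := by
  rw [whittakerProfile]; ring_nf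

theorem whittakerProfile_peak (k : ℝ) :
    whittakerProfile k (k / (4 * π)) = k ^ (k / 2) * exp (-(k / 2)) := by
  rw [whittakerProfile_eq, mul_div_cancel₀ _ (by positivity)]
  ring_nf

theorem whittakerProfile_le_peak {k y : ℝ} (hk : 0 < k) (hy : 0 < y) :
    whittakerProfile k y ≤ whittakerProfile k (k / (4 * π)) := by
  rw [whittakerProfile_eq, whittakerProfile_peak]
  convert rpow_mul_exp_neg_mul_le (half_pos hk) one_half_pos (by positivity : 0 < 4 * π * y)
    using 3
  field_simp

theorem whittakerProfile_le_peak_mul_exp {k y : ℝ} (hk : 0 < k) (hy : 2 * k ≤ y) :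
    whittakerProfile k y ≤ whittakerProfile k (k / (4 * π)) * exp (-(π * y)) := by
  have hx : 16 * (k / 2 / (1 / 2)) ≤ 4 * π * y := by nlinarith [pi_gt_three]
  rw [whittakerProfile_eq, whittakerProfile_peak]
  convert rpow_mul_exp_neg_mul_le_of_le (half_pos hk) one_half_pos hx using 4
  · field_simp
  · ring

open Stirling in
theorem Gamma_rpow_neg_half_mul_whittakerProfile_peak {k : ℕ} (hk : k ≠ 0) :
    Gamma k ^ (-(1 / 2) : ℝ) * whittakerProfile k (k / (4 * π)) =
      (k : ℝ) ^ ((1 : ℝ) / 4) / √(√2 * stirlingSeq k) := by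
  have hk0 : (0 : ℝ) < k := by positivity
  have hG : 0 < Gamma k := Gamma_pos_of_pos hk0
  have hs : 0 ≤ √2 * stirlingSeq k := mul_nonneg (sqrt_nonneg _)
    ((sqrt_nonneg π).trans (sqrt_pi_le_stirlingSeq hk))
  have hpeak : (k : ℝ) ^ ((k : ℝ) / 2) * exp (-(k / 2)) = √((k : ℝ) ^ k * exp (-k)) := by
    rw [sqrt_mul (by positivity), ← exp_half, sqrt_eq_rpow, ← rpow_natCast, ← rpow_mul hk0.le]
    ring_nf
  have hquarter : (k : ℝ) ^ ((1 : ℝ) / 4) = √√k := by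
    rw [sqrt_eq_rpow, sqrt_eq_rpow, ← rpow_mul hk0.le]
    norm_num
  rw [whittakerProfile_peak, hpeak, rpow_neg hG.le, ← sqrt_eq_rpow, hquarter,
    ← sqrt_div' _ hs, ← pow_mul_exp_neg_div_Gamma hk, sqrt_div' _ hG.le]
  ring

open Stirling in
theorem whittaker_max :
    ∃ c₁ c₂ C : ℝ, 0 < c₁ ∧ 0 < c₂ ∧ 0 < C ∧
      ∀ (k : ℕ), 2 ≤ k →
      ∀ W : ℝ → ℝ,
        (∀ y : ℝ, 0 < y →
          W y = (Real.Gamma k) ^ (-(1 / 2) : ℝ) * (4 * π * y) ^ ((k : ℝ) / 2) *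
            Real.exp (-2 * π * y)) →
        (∀ y : ℝ, 0 < y → W y ≤ W ((k : ℝ) / (4 * π))) ∧
        c₁ * (k : ℝ) ^ ((1 : ℝ) / 4) ≤ W ((k : ℝ) / (4 * π)) ∧
        W ((k : ℝ) / (4 * π)) ≤ c₂ * (k : ℝ) ^ ((1 : ℝ) / 4) ∧
        (∀ y : ℝ, 10 * k < y → W y ≤ C * (k : ℝ) ^ ((1 : ℝ) / 4) * Real.exp (-π * y)) := by
  refine ⟨1 / √(exp 1), 1 / √(√2 * √π), 1 / √(√2 * √π), by positivity, by positivity,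
    by positivity, fun k hk W hW => ?_⟩
  have hk0 : k ≠ 0 := by omega
  have hkpos : (0 : ℝ) < k := by positivity
  have hy₀ : (0 : ℝ) < k / (4 * π) := by positivity
  have hW' : ∀ y, 0 < y → W y = Gamma k ^ (-(1 / 2) : ℝ) * whittakerProfile k y := fun y hy => by
    rw [hW y hy, whittakerProfile, mul_assoc]
  have hGamma : 0 ≤ Gamma k ^ (-(1 / 2) : ℝ) := rpow_nonneg (Gamma_pos_of_pos hkpos).le _
  have hpeak : W (k / (4 * π)) = (k : ℝ) ^ ((1 : ℝ) / 4) / √(√2 * stirlingSeq k) := by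
    rw [hW' _ hy₀, Gamma_rpow_neg_half_mul_whittakerProfile_peak hk0]
  have hstirling : √2 * √π ≤ √2 * stirlingSeq k := by
    gcongr
    exact sqrt_pi_le_stirlingSeq hk0
  have hupper : W (k / (4 * π)) ≤ 1 / √(√2 * √π) * (k : ℝ) ^ ((1 : ℝ) / 4) := by
    rw [hpeak, one_div_mul_eq_div]; gcongr
  refine ⟨fun y hy => ?_, ?_, hupper, fun y hy => ?_⟩
  · rw [hW' y hy, hW' _ hy₀]
    exact mul_le_mul_of_nonneg_left (whittakerProfile_le_peak hkpos hy) hGamma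
  · rw [hpeak, one_div_mul_eq_div]
    exact div_le_div_of_nonneg_left (by positivity) (sqrt_pos.2 (lt_of_lt_of_le (by positivity) hstirling))
      (sqrt_le_sqrt (sqrt_two_mul_stirlingSeq_le_exp_one hk0))
  · have hy' : 2 * (k : ℝ) ≤ y := by linarith
    calc W y = Gamma k ^ (-(1 / 2) : ℝ) * whittakerProfile k y := hW' y (by linarith)
      _ ≤ Gamma k ^ (-(1 / 2) : ℝ) * (whittakerProfile k (k / (4 * π)) * exp (-(π * y))) :=
        mul_le_mul_of_nonneg_left (whittakerProfile_le_peak_mul_exp hkpos hy') hGamma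
      _ = W (k / (4 * π)) * exp (-π * y) := by rw [hW' _ hy₀, neg_mul]; ring
      _ ≤ 1 / √(√2 * √π) * (k : ℝ) ^ ((1 : ℝ) / 4) * exp (-π * y) := by gcongr
end

section
/- For real t > 1 and real y ≥ 1, ∑_{n ≤ t/y, |2πny − t| > t^(1/3)} |( (2πny)² − t² )|^(-1/2) ≪ (1 + log(ty))/y + t^(-2/3). -/
/-!
Since `(2πny)² - t² = (2πny - t)(2πny + t)`, each term is at most `(t |2πny - t|)^(-1/2)`, and
`2πny - t = 2πy (n - x)` with `x = t / (2πy)`. Let `k` be the integer nearest to `x`. For `n = k`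
the cut-off `|2πny - t| > t^(1/3)` bounds the term by `t^(-2/3)`. For `n ≠ k` we have
`|n - x| ≥ |n - k| / 2`, so the term is at most `(πty)^(-1/2) |n - k|^(-1/2)`; summing over
`n ≤ t/y` on both sides of `k` gives at most `4 (πty)^(-1/2) √(t/y) ≤ 4/y`.
-/

open Real Finset

namespace Finset

variable {ι κ M : Type*} [AddCommMonoid M] [PartialOrder M] [IsOrderedAddMonoid M]

lemma sum_comp_le_sum_of_injOn {s : Finset ι} {t : Finset κ} {g : κ → M} (e : ι → κ)
    (he : Set.InjOn e s) (hest : Set.MapsTo e s t) (hg : ∀ j ∈ t, 0 ≤ g j) :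
    ∑ i ∈ s, g (e i) ≤ ∑ j ∈ t, g j := by
  classical
  rw [← sum_image he]
  exact sum_le_sum_of_subset_of_nonneg (image_subset_iff.2 hest) fun j hj _ ↦ hg j hj

lemma sum_le_add_sum_erase [DecidableEq ι] {s : Finset ι} {f : ι → M} (a : ι) {c : M}
    (hc : 0 ≤ c) (ha : a ∈ s → f a ≤ c) : ∑ i ∈ s, f i ≤ c + ∑ i ∈ s.erase a, f i := by
  by_cases h : a ∈ s
  · rw [← add_sum_erase s f h]
    exact add_le_add_left (ha h) _
  · rw [erase_eq_of_notMem h]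
    exact le_add_of_nonneg_left hc

end Finset

lemma sum_erase_abs_sub_le {f : ℝ → ℝ} (hf : ∀ j : ℕ, 0 ≤ f j) {N k : ℕ} (hk : k ≤ N + 1) :
    ∑ n ∈ (Icc 1 N).erase k, f |(n : ℝ) - k| ≤ 2 * ∑ j ∈ Icc 1 N, f j := by
  rw [← sum_filter_add_sum_filter_not _ (· < k), two_mul]
  have hg : ∀ j ∈ Icc 1 N, 0 ≤ f j := fun j _ ↦ hf j
  refine add_le_add ?below ?above
  case below =>
    calc ∑ n ∈ ((Icc 1 N).erase k).filter (· < k), f |(n : ℝ) - k|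
        = ∑ n ∈ ((Icc 1 N).erase k).filter (· < k), f ((k - n : ℕ) : ℝ) := by
          refine sum_congr rfl fun n hn ↦ ?_
          rw [mem_filter] at hn
          rw [abs_sub_comm, abs_of_nonneg (by simpa using hn.2.le), Nat.cast_sub hn.2.le]
      _ ≤ _ := sum_comp_le_sum_of_injOn (g := fun j : ℕ ↦ f j) (fun n ↦ k - n)
          (fun n hn m hm h ↦ by simp at hn hm h; omega)
          (fun n hn ↦ by simp at hn ⊢; omega) hg
  case above =>
    calc ∑ n ∈ ((Icc 1 N).erase k).filter (¬ · < k), f |(n : ℝ) - k|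
        = ∑ n ∈ ((Icc 1 N).erase k).filter (¬ · < k), f ((n - k : ℕ) : ℝ) := by
          refine sum_congr rfl fun n hn ↦ ?_
          rw [mem_filter, not_lt] at hn
          rw [abs_of_nonneg (by simpa using hn.2), Nat.cast_sub hn.2]
      _ ≤ _ := sum_comp_le_sum_of_injOn (g := fun j : ℕ ↦ f j) (fun n ↦ n - k)
          (fun n hn m hm h ↦ by simp at hn hm h; omega)
          (fun n hn ↦ by simp at hn ⊢; omega) hg

lemma sum_Icc_rpow_neg_half_le (N : ℕ) : ∑ j ∈ Icc 1 N, (j : ℝ) ^ (-(1 / 2) : ℝ) ≤ 2 * √N := by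
  induction N with
  | zero => simp
  | succ N ih =>
    rw [sum_Icc_succ_top (by omega)]
    have hs : √(N + 1 : ℝ) ^ 2 = N + 1 := sq_sqrt (by positivity)
    have hr : √(N : ℝ) ^ 2 = N := sq_sqrt (by positivity)
    have hs0 : 0 < √(N + 1 : ℝ) := sqrt_pos.2 (by positivity)
    -- `1 / √(N+1) ≤ 2 (√(N+1) - √N)` since `2 √N √(N+1) ≤ 2N + 1`.
    have step : ((N + 1 : ℕ) : ℝ) ^ (-(1 / 2) : ℝ) ≤ 2 * √(N + 1 : ℝ) - 2 * √N := by
      rw [rpow_neg (by positivity), ← sqrt_eq_rpow, Nat.cast_succ, inv_le_iff_one_le_mul₀ hs0]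
      nlinarith [sq_nonneg (√(N + 1 : ℝ) - √N)]
    push_cast at step ⊢
    linarith

lemma rpow_neg_half_mul_sqrt_le {t y N : ℝ} (ht : 0 < t) (hy : 0 < y) (hN : 0 ≤ N)
    (hNt : N ≤ t / y) : (t * π * y) ^ (-(1 / 2) : ℝ) * √N ≤ 1 / y := by
  have hty : 0 < √(t * π * y) := sqrt_pos.2 (by positivity)
  have hNy : √N * y = √(N * y ^ 2) := by rw [sqrt_mul hN, sqrt_sq hy.le]
  rw [rpow_neg (by positivity), ← sqrt_eq_rpow, inv_mul_le_iff₀ hty, mul_one_div,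
    le_div_iff₀ hy, hNy]
  refine sqrt_le_sqrt ?_
  rw [le_div_iff₀ hy] at hNt
  nlinarith [mul_le_mul_of_nonneg_right hNt hy.le, pi_gt_three, mul_pos ht hy]

lemma abs_sq_sub_sq_rpow_le {a t r : ℝ} (ha : 0 ≤ a) (ht : 0 ≤ t) (hr : r ≤ 0)
    (h : 0 < t * |a - t|) : |a ^ 2 - t ^ 2| ^ r ≤ (t * |a - t|) ^ r := by
  refine rpow_le_rpow_of_nonpos h ?_ hr
  rw [sq_sub_sq, abs_mul, abs_of_nonneg (add_nonneg ha ht)]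
  exact mul_le_mul_of_nonneg_right (by linarith) (abs_nonneg _)

lemma abs_sq_sub_sq_rpow_neg_half_le {a t : ℝ} (ha : 0 ≤ a) (ht : 0 < t)
    (h : t ^ ((1 : ℝ) / 3) < |a - t|) : |a ^ 2 - t ^ 2| ^ (-(1 / 2) : ℝ) ≤ t ^ (-(2 / 3) : ℝ) := by
  have ht13 : 0 < t ^ ((1 : ℝ) / 3) := rpow_pos_of_pos ht _
  calc |a ^ 2 - t ^ 2| ^ (-(1 / 2) : ℝ)
      ≤ (t * |a - t|) ^ (-(1 / 2) : ℝ) :=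
        abs_sq_sub_sq_rpow_le ha ht.le (by norm_num) (mul_pos ht (ht13.trans h))
    _ ≤ (t * t ^ ((1 : ℝ) / 3)) ^ (-(1 / 2) : ℝ) :=
        rpow_le_rpow_of_nonpos (by positivity) (by gcongr) (by norm_num)
    _ = t ^ (-(2 / 3) : ℝ) := by
        rw [← rpow_one_add' ht.le (by norm_num), ← rpow_mul ht.le]
        norm_num

lemma abs_sub_natFloor_add_half_le {x : ℝ} (hx : 0 ≤ x) : |x - ⌊x + 1 / 2⌋₊| ≤ 1 / 2 := by
  have hle : (⌊x + 1 / 2⌋₊ : ℝ) ≤ x + 1 / 2 := Nat.floor_le (by positivity)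
  have hlt : x + 1 / 2 < ⌊x + 1 / 2⌋₊ + 1 := Nat.lt_floor_add_one _
  exact abs_le.2 ⟨by linarith, by linarith⟩

lemma half_abs_sub_le_abs_sub_of_ne {n k : ℤ} {x : ℝ} (hk : |x - k| ≤ 1 / 2) (hnk : n ≠ k) :
    |(n : ℝ) - k| / 2 ≤ |(n : ℝ) - x| := by
  have hone : (1 : ℝ) ≤ |(n : ℝ) - k| := by exact_mod_cast Int.one_le_abs (sub_ne_zero.2 hnk)
  linarith [abs_sub_le (n : ℝ) x k]

lemma abs_sq_sub_sq_rpow_neg_half_le_of_ne {t y : ℝ} (ht : 0 < t) (hy : 0 < y) {n k : ℕ}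
    (hk : |t / (2 * π * y) - k| ≤ 1 / 2) (hnk : n ≠ k) :
    |(2 * π * n * y) ^ 2 - t ^ 2| ^ (-(1 / 2) : ℝ)
      ≤ (t * π * y) ^ (-(1 / 2) : ℝ) * |(n : ℝ) - k| ^ (-(1 / 2) : ℝ) := by
  have hsep : |(n : ℝ) - k| / 2 ≤ |n - t / (2 * π * y)| := by
    simpa using half_abs_sub_le_abs_sub_of_ne (n := n) (k := k) (by simpa using hk)
      (by exact_mod_cast hnk)
  have hnk0 : 0 < |(n : ℝ) - k| := abs_pos.2 (sub_ne_zero.2 (by exact_mod_cast hnk))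
  have hd : π * y * |(n : ℝ) - k| ≤ |2 * π * n * y - t| := by
    have : 2 * π * n * y - t = 2 * π * y * (n - t / (2 * π * y)) := by field_simp
    rw [this, abs_mul, abs_of_pos (by positivity : 0 < 2 * π * y)]
    nlinarith [mul_pos pi_pos hy]
  calc |(2 * π * n * y) ^ 2 - t ^ 2| ^ (-(1 / 2) : ℝ)
      ≤ (t * |2 * π * n * y - t|) ^ (-(1 / 2) : ℝ) :=
        abs_sq_sub_sq_rpow_le (by positivity) ht.le (by norm_num)
          (mul_pos ht ((by positivity : 0 < π * y * |(n : ℝ) - k|).trans_le hd))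
    _ ≤ (t * (π * y * |(n : ℝ) - k|)) ^ (-(1 / 2) : ℝ) :=
        rpow_le_rpow_of_nonpos (by positivity) (by gcongr) (by norm_num)
    _ = (t * π * y) ^ (-(1 / 2) : ℝ) * |(n : ℝ) - k| ^ (-(1 / 2) : ℝ) := by
        rw [← mul_rpow (by positivity) (abs_nonneg _), mul_assoc t, mul_assoc t]

lemma sum_erase_abs_sq_sub_sq_rpow_neg_half_le {t y : ℝ} (ht : 0 < t) (hy : 0 < y) {k : ℕ}
    (hk : |t / (2 * π * y) - k| ≤ 1 / 2) :
    ∑ n ∈ (Icc 1 ⌊t / y⌋₊).erase k, |(2 * π * n * y) ^ 2 - t ^ 2| ^ (-(1 / 2) : ℝ) ≤ 4 / y := by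
  set N := ⌊t / y⌋₊
  have hkN : k ≤ N + 1 := by
    have hx : t / (2 * π * y) ≤ t / y :=
      div_le_div_of_nonneg_left ht.le hy (by nlinarith [pi_gt_three])
    have : (k : ℝ) < N + 2 := by linarith [abs_le.1 hk, Nat.lt_floor_add_one (t / y)]
    exact Nat.lt_succ_iff.1 (by exact_mod_cast this)
  calc _ ≤ ∑ n ∈ (Icc 1 N).erase k,
          (t * π * y) ^ (-(1 / 2) : ℝ) * |(n : ℝ) - k| ^ (-(1 / 2) : ℝ) :=
        sum_le_sum fun n hn ↦ abs_sq_sub_sq_rpow_neg_half_le_of_ne ht hy hk (ne_of_mem_erase hn)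
    _ ≤ (t * π * y) ^ (-(1 / 2) : ℝ) * (2 * (2 * √N)) := by
        rw [← mul_sum]
        gcongr
        exact (sum_erase_abs_sub_le (f := fun x : ℝ ↦ x ^ (-(1 / 2) : ℝ))
          (fun j ↦ by positivity) hkN).trans (by gcongr; exact sum_Icc_rpow_neg_half_le N)
    _ ≤ 4 / y := by
        have := rpow_neg_half_mul_sqrt_le ht hy (Nat.cast_nonneg N) (Nat.floor_le (by positivity))
        rw [show 4 / y = 4 * (1 / y) by ring]
        linarith

theorem bessel_tail_sum :
    ∃ K : ℝ, 0 < K ∧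
      ∀ (t y : ℝ), 1 < t → 1 ≤ y →
      ∑ n ∈ (Finset.Icc 1 ⌊t / y⌋₊).filter
          (fun n : ℕ => t ^ ((1 : ℝ) / 3) < |2 * π * (n : ℝ) * y - t|),
          |(2 * π * (n : ℝ) * y) ^ 2 - t ^ 2| ^ (-(1 / 2) : ℝ)
        ≤ K * ((1 + Real.log (t * y)) / y + t ^ (-(2 / 3) : ℝ)) := by
  refine ⟨4, by norm_num, fun t y ht hy ↦ ?_⟩
  have ht0 : 0 < t := by linarith
  have hy0 : 0 < y := by linarith
  -- `k` is the integer nearest to `t / (2πy)`, the only `n` at which `2πny` can be close to `t`.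
  set k := ⌊t / (2 * π * y) + 1 / 2⌋₊
  have hk : |t / (2 * π * y) - k| ≤ 1 / 2 := abs_sub_natFloor_add_half_le (by positivity)
  have hlog : 1 / y ≤ (1 + Real.log (t * y)) / y := by
    gcongr
    linarith [Real.log_nonneg (by nlinarith : (1 : ℝ) ≤ t * y)]
  have ht23 : 0 ≤ t ^ (-(2 / 3) : ℝ) := by positivity
  calc _ ≤ t ^ (-(2 / 3) : ℝ) + ∑ n ∈ ((Icc 1 ⌊t / y⌋₊).filter
          (fun n : ℕ => t ^ ((1 : ℝ) / 3) < |2 * π * (n : ℝ) * y - t|)).erase k,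
          |(2 * π * (n : ℝ) * y) ^ 2 - t ^ 2| ^ (-(1 / 2) : ℝ) :=
        sum_le_add_sum_erase k ht23 fun hkS ↦
          abs_sq_sub_sq_rpow_neg_half_le (by positivity) ht0 (mem_filter.1 hkS).2
    _ ≤ t ^ (-(2 / 3) : ℝ) + 4 / y := by
        grw [sum_le_sum_of_subset_of_nonneg (erase_subset_erase k (filter_subset _ _))
          fun n _ _ ↦ by positivity, sum_erase_abs_sq_sub_sq_rpow_neg_half_le ht0 hy0 hk]
    _ ≤ 4 * ((1 + Real.log (t * y)) / y + t ^ (-(2 / 3) : ℝ)) := by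
        rw [show 4 / y = 4 * (1 / y) by ring]
        linarith
end
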